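/- (Conditional Importance Matching Lemma, conditional-on-proposals form.) Let 𝒴 and 𝒵 be countable alphabets. Let (S_i, Y_i)_{i=1}^N be i.i.d. with Y_i ∼ p_Y on 𝒴 and S_i ∼ Exponential(1) independent of Y_i. Let X ∼ p_X be independent of (S_i, Y_i)_{i=1}^N, with conditional distribution p_{Y|X}. Given X = x, let U_P = argmin_{1≤i≤N} S_i · p_Y(Y_i)/p_{Y|X}(Y_i|x) and Y = Y_{U_P}; sample Z ∼ p_{Z|X,Y}(·|x, Y), so that Z → (X, Y) → (S_i, Y_i)_{i=1}^N forms a Markov chain. Let Q_{Y|Z} be any conditional distribution with Q_{Y|Z}(y|z)/p_Y(y) ≤ ω for all y, z, and given Z = z let U_Q = argmin_{1≤i≤N} S_i · p_Y(Y_i)/Q_{Y|Z}(Y_i|z). Then for every k, x, z, and samples (y_1,…,y_N): Pr(U_P ≠ U_Q | U_P = k, X = x, Z = z, (Y_1,…,Y_N) = (y_1,…,y_N)) ≤ 1 − (1 + (p_{Y|X}(y_k|x)/Q_{Y|Z}(y_k|z)) · ((1/N)Σ_{j=1}^N Q_{Y|Z}(y_j|z)/p_Y(y_j)) / ((1/N)Σ_{j=1}^N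 p_{Y|X}(y_j|x)/p_Y(y_j)))^{-1}. -/

import Mathlib

/-!
Fix `x`, `z` and the labels `y`, and let `ρ j = p_{Y|X}(y j|x) / p_Y(y j)` and
`σ j = Q_{Y|Z}(y j|z) / p_Y(y j)`, so that `U_P` minimises `S j / ρ j` and `U_Q` minimises
`S j / σ j`. Given `X = x` and `Y = y` the clocks `S` are i.i.d. `Exp(1)` and independent of the
randomness `V` behind `Z`, so every event `{V ∈ A, X = x, Y = y, S ∈ R}` has probability
`c ⬝ Exp(1)^N (R)` for one constant `c`. The conditioning event lies in the race
`{S j ≥ (ρ j / ρ k) ⬝ S k for j ≠ k}`, while the strict race with thresholds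
`max (ρ j / ρ k) (σ j / σ k)` lies in it and forces `U_P = U_Q = k`. Integrating out `S k`, a race
with thresholds `m j` has probability `(1 + ∑_{j ≠ k} m j)⁻¹`. The ratio of the two race
probabilities is therefore at least `(1 + q)⁻¹`, `q` the ratio in the statement, because
`1 + ∑_{j ≠ k} max (ρ j / ρ k) (σ j / σ k) ≤ ∑ ρ / ρ k + ∑ σ / σ k = (1 + q) ⬝ ∑ ρ / ρ k`.
-/

open MeasureTheory ProbabilityTheory Real Set
open scoped ENNReal

instance isProbabilityMeasure_expMeasure_one : IsProbabilityMeasure (expMeasure 1) :=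
  isProbabilityMeasure_expMeasure one_pos

lemma expMeasure_Ioi {r c : ℝ} (hr : 0 < r) (hc : 0 ≤ c) :
    expMeasure r (Ioi c) = ENNReal.ofReal (exp (-(r * c))) := by
  have := isProbabilityMeasure_expMeasure hr
  have hexp : exp (-(r * c)) ≤ 1 := exp_le_one_iff.2 (by nlinarith)
  rw [← compl_Iic, prob_compl_eq_one_sub measurableSet_Iic, ← ofReal_cdf,
    cdf_expMeasure_eq hr, if_pos hc, ← ENNReal.ofReal_one,
    ← ENNReal.ofReal_sub _ (sub_nonneg.2 hexp), sub_sub_cancel]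

lemma expMeasure_singleton (r c : ℝ) : expMeasure r {c} = 0 :=
  withDensity_absolutelyContinuous _ _ Real.volume_singleton

lemma expMeasure_Ici {r c : ℝ} (hr : 0 < r) (hc : 0 ≤ c) :
    expMeasure r (Ici c) = ENNReal.ofReal (exp (-(r * c))) := by
  rw [← measure_congr (Ioi_ae_eq_Ici' (expMeasure_singleton r c)), expMeasure_Ioi hr hc]

lemma lintegral_expMeasure_of_eqOn {r M : ℝ} (hr : 0 < r) (hM : 0 ≤ M) {g : ℝ → ℝ≥0∞}
    (hg : EqOn g (fun s => ENNReal.ofReal (exp (-(r * (M * s))))) (Ici 0)) :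
    ∫⁻ s, g s ∂expMeasure r = ENNReal.ofReal (1 + M)⁻¹ := by
  have hpdf : ∀ s, exponentialPDF r s * g s
      = ENNReal.ofReal (1 + M)⁻¹ * exponentialPDF (r * (1 + M)) s := by
    intro s
    rcases le_or_gt 0 s with hs | hs
    · rw [hg hs, exponentialPDF_of_nonneg hs, exponentialPDF_of_nonneg hs,
        ← ENNReal.ofReal_mul (by positivity), ← ENNReal.ofReal_mul (by positivity), mul_assoc,
        ← exp_add]
      congr 1
      field_simp
      ring_nf
    · rw [exponentialPDF_of_neg hs, exponentialPDF_of_neg hs, zero_mul, mul_zero]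
  change ∫⁻ s, g s ∂volume.withDensity (exponentialPDF r) = _
  rw [lintegral_withDensity_eq_lintegral_mul_non_measurable (f := exponentialPDF r) _
    (by exact (measurable_exponentialPDFReal r).ennreal_ofReal)
    (ae_of_all _ fun _ => ENNReal.ofReal_lt_top)]
  simp only [Pi.mul_apply, hpdf]
  rw [lintegral_const_mul _ (by exact (measurable_exponentialPDFReal _).ennreal_ofReal),
    lintegral_exponentialPDF_eq_one (by positivity), mul_one]

def raceSet {ι : Type*} (k : ι) (t : ι → ℝ → Set ℝ) : Set (ι → ℝ) :=
  {s | ∀ j ≠ k, s j ∈ t j (s k)}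

lemma measurableSet_raceSet {ι : Type*} [Countable ι] (k : ι) {t : ι → ℝ → Set ℝ}
    (ht : ∀ j, MeasurableSet {q : ℝ × ℝ | q.2 ∈ t j q.1}) : MeasurableSet (raceSet k t) := by
  have : raceSet k t
      = ⋂ j, ⋂ (_ : j ≠ k), (fun s : ι → ℝ => (s k, s j)) ⁻¹' {q | q.2 ∈ t j q.1} := by
    ext s; simp [raceSet]
  rw [this]
  exact .iInter fun j => .iInter fun _ => (ht j).preimage (by fun_prop)

lemma raceSet_mono {ι : Type*} {k : ι} {t t' : ι → ℝ → Set ℝ} (h : ∀ j u, t j u ⊆ t' j u) :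
    raceSet k t ⊆ raceSet k t' :=
  fun _ hs j hj => h _ _ (hs j hj)

lemma sum_compl_singleton_eq_sum_succAbove {n : ℕ} (k : Fin (n + 1)) (m : Fin (n + 1) → ℝ) :
    ∑ j ∈ ({k}ᶜ : Finset _), m j = ∑ j, m (k.succAbove j) := by
  have h1 := Finset.sum_compl_add_sum {k} m
  have h2 := Fin.sum_univ_succAbove m k
  simp only [Finset.sum_singleton] at h1
  linarith

lemma pi_expMeasure_raceSet {N : ℕ} {r : ℝ} (hr : 0 < r) (k : Fin N) {t : Fin N → ℝ → Set ℝ}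
    {m : Fin N → ℝ} (hm : ∀ j, 0 ≤ m j) (ht : ∀ j, MeasurableSet {q : ℝ × ℝ | q.2 ∈ t j q.1})
    (htail : ∀ j s, 0 ≤ s → expMeasure r (t j s) = ENNReal.ofReal (exp (-(r * (m j * s))))) :
    Measure.pi (fun _ => expMeasure r) (raceSet k t)
      = ENNReal.ofReal (1 + ∑ j ∈ ({k}ᶜ : Finset _), m j)⁻¹ := by
  have := isProbabilityMeasure_expMeasure hr
  obtain ⟨n, rfl⟩ : ∃ n, N = n + 1 := ⟨N - 1, by have := k.pos; omega⟩
  set C : Set (ℝ × (Fin n → ℝ)) := {p | ∀ j, p.2 j ∈ t (k.succAbove j) p.1}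
  have hC : MeasurableSet C := by
    have : C = ⋂ j, (fun p : ℝ × (Fin n → ℝ) => (p.1, p.2 j)) ⁻¹'
        {q | q.2 ∈ t (k.succAbove j) q.1} := by
      ext p; simp [C]
    rw [this]
    exact .iInter fun j => (ht _).preimage (by fun_prop)
  have hrace : raceSet k t = MeasurableEquiv.piFinSuccAbove (fun _ => ℝ) k ⁻¹' C := by
    ext s
    simp [raceSet, C, Fin.forall_iff_succAbove k, Fin.succAbove_ne, Fin.removeNth]
  rw [hrace, (measurePreserving_piFinSuccAbove (fun _ => expMeasure r) k).measure_preimage_equiv,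
    Measure.prod_apply hC, sum_compl_singleton_eq_sum_succAbove]
  refine lintegral_expMeasure_of_eqOn hr (Finset.sum_nonneg fun j _ => hm _) fun s hs => ?_
  have hslice : Prod.mk s ⁻¹' C = univ.pi fun j => t (k.succAbove j) s := by
    ext p; simp [C]
  simp only [hslice, Measure.pi_pi, htail _ s hs]
  rw [← ENNReal.ofReal_prod_of_nonneg fun j _ => (exp_pos _).le, ← exp_sum, Finset.sum_mul,
    Finset.mul_sum, Finset.sum_neg_distrib]

lemma mem_raceSet_of_forall_div_le {ι : Type*} {c s : ι → ℝ} (hc : ∀ j, 0 < c j) {k : ι}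
    (hk : ∀ j, s k / c k ≤ s j / c j) : s ∈ raceSet k fun j u => Ici (c j / c k * u) := by
  intro j _
  have := hk j
  rw [div_le_div_iff₀ (hc k) (hc j)] at this
  rw [mem_Ici, div_mul_eq_mul_div, div_le_iff₀ (hc k)]
  linarith

lemma eq_of_mem_raceSet {ι : Type*} {c s : ι → ℝ} (hc : ∀ j, 0 < c j) {U k : ι}
    (hU : ∀ j, s U / c U ≤ s j / c j) (hs : s ∈ raceSet k fun j u => Ioi (c j / c k * u)) :
    U = k := by
  by_contra hUk
  have h₁ := hU k
  have h₂ : c U / c k * s k < s U := hs U hUk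
  rw [div_le_div_iff₀ (hc U) (hc k)] at h₁
  rw [div_mul_eq_mul_div, div_lt_iff₀ (hc k)] at h₂
  linarith

lemma one_add_sum_compl_div {ι : Type*} [Fintype ι] [DecidableEq ι] (ρ : ι → ℝ) {k : ι}
    (hk : ρ k ≠ 0) : 1 + ∑ j ∈ ({k}ᶜ : Finset ι), ρ j / ρ k = (∑ j, ρ j) / ρ k := by
  rw [← Finset.sum_compl_add_sum {k}, Finset.sum_singleton, add_div, Finset.sum_div,
    div_self hk, add_comm]

lemma one_add_sum_max_div_le {ι : Type*} [Fintype ι] [DecidableEq ι] {ρ σ : ι → ℝ}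
    (hρ : ∀ j, 0 < ρ j) (hσ : ∀ j, 0 < σ j) (k : ι) :
    1 + ∑ j ∈ ({k}ᶜ : Finset ι), max (ρ j / ρ k) (σ j / σ k)
      ≤ (1 + ρ k / σ k * ((∑ j, σ j) / ∑ j, ρ j)) * (1 + ∑ j ∈ ({k}ᶜ : Finset ι), ρ j / ρ k) := by
  have hρsum : 0 < ∑ j, ρ j := Finset.sum_pos (fun j _ => hρ j) ⟨k, Finset.mem_univ k⟩
  have hsplit : (1 + ρ k / σ k * ((∑ j, σ j) / ∑ j, ρ j))
        * (1 + ∑ j ∈ ({k}ᶜ : Finset ι), ρ j / ρ k)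
      = (1 + ∑ j ∈ ({k}ᶜ : Finset ι), ρ j / ρ k) + (1 + ∑ j ∈ ({k}ᶜ : Finset ι), σ j / σ k) := by
    rw [one_add_sum_compl_div ρ (hρ k).ne', one_add_sum_compl_div σ (hσ k).ne']
    field_simp [(hρ k).ne', (hσ k).ne', hρsum.ne']
  have hmax : ∑ j ∈ ({k}ᶜ : Finset ι), max (ρ j / ρ k) (σ j / σ k)
      ≤ ∑ j ∈ ({k}ᶜ : Finset ι), (ρ j / ρ k + σ j / σ k) :=
    Finset.sum_le_sum fun j _ => max_le_add_of_nonneg (div_pos (hρ j) (hρ k)).le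
      (div_pos (hσ j) (hσ k)).le
  rw [hsplit]
  rw [Finset.sum_add_distrib] at hmax
  linarith

lemma cond_le_one_sub_of_mul_le {Ω : Type*} [MeasurableSpace Ω] {μ : Measure Ω}
    [IsFiniteMeasure μ] {E A L t : Set Ω} {r : ℝ≥0∞} (hE : MeasurableSet E)
    (hL : MeasurableSet L) (hEA : E ⊆ A) (hLE : L ⊆ E) (hLt : Disjoint L t)
    (h : r * μ A ≤ μ L) : μ[|E] t ≤ 1 - r := by
  rw [cond_apply hE]
  rcases eq_or_ne (μ E) 0 with hE0 | hE0
  · simp [measure_mono_null inter_subset_left hE0]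
  have hEt : μ (E ∩ t) ≤ μ E - μ L := by
    rw [← measure_sdiff hLE hL.nullMeasurableSet (measure_ne_top μ L)]
    exact measure_mono fun ω hω => ⟨hω.1, fun hωL => hLt.ne_of_mem hωL hω.2 rfl⟩
  have hr : r ≤ μ L / μ E :=
    (ENNReal.le_div_iff_mul_le (.inl hE0) (.inl (measure_ne_top μ E))).2
      ((by gcongr : r * μ E ≤ r * μ A).trans h)
  calc (μ E)⁻¹ * μ (E ∩ t) ≤ (μ E)⁻¹ * (μ E - μ L) := by gcongr
    _ = 1 - μ L / μ E := by
      rw [ENNReal.mul_sub fun _ _ => ENNReal.inv_ne_top.2 hE0,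
        ENNReal.inv_mul_cancel hE0 (measure_ne_top μ E), ENNReal.div_eq_inv_mul]
    _ ≤ 1 - r := tsub_le_tsub_left hr 1

lemma cond_le_of_subset_raceSet {Ω : Type*} [MeasurableSpace Ω] {μ : Measure Ω}
    [IsFiniteMeasure μ] {N : ℕ} {k : Fin N} {ρ σ : Fin N → ℝ} (hρ : ∀ j, 0 < ρ j)
    (hσ : ∀ j, 0 < σ j) {E D : Set Ω} {event : Set (Fin N → ℝ) → Set Ω} {c : ℝ≥0∞}
    (hE : MeasurableSet E) (hevent : ∀ R, MeasurableSet R → MeasurableSet (event R))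
    (hμ : ∀ R, MeasurableSet R → μ (event R) = c * Measure.pi (fun _ => expMeasure 1) R)
    (hEA : E ⊆ event (raceSet k fun j u => Ici (ρ j / ρ k * u)))
    (hLE : event (raceSet k fun j u => Ioi (max (ρ j / ρ k * u) (σ j / σ k * u))) ⊆ E \ D) :
    μ[|E] D ≤ ENNReal.ofReal (1 - (1 + ρ k / σ k * ((∑ j, σ j) / ∑ j, ρ j))⁻¹) := by
  have ha : ∀ j, 0 ≤ ρ j / ρ k := fun j => (div_pos (hρ j) (hρ k)).le
  have hmax : ∀ j, 0 ≤ max (ρ j / ρ k) (σ j / σ k) := fun j => (ha j).trans (le_max_left _ _)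
  have hA : MeasurableSet (raceSet k fun j u => Ici (ρ j / ρ k * u)) :=
    measurableSet_raceSet k fun j => measurableSet_le (by fun_prop) measurable_snd
  have hL : MeasurableSet (raceSet k fun j u => Ioi (max (ρ j / ρ k * u) (σ j / σ k * u))) :=
    measurableSet_raceSet k fun j => measurableSet_lt (by fun_prop) measurable_snd
  have hq : 0 ≤ ρ k / σ k * ((∑ j, σ j) / ∑ j, ρ j) :=
    mul_nonneg (div_pos (hρ k) (hσ k)).le (div_nonneg (Finset.sum_nonneg fun j _ => (hσ j).le)
      (Finset.sum_nonneg fun j _ => (hρ j).le))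
  rw [ENNReal.ofReal_sub _ (inv_nonneg.2 (by linarith)), ENNReal.ofReal_one]
  refine cond_le_one_sub_of_mul_le hE (hevent _ hL) hEA (fun ω hω => (hLE hω).1)
    (disjoint_left.2 fun ω hω => (hLE hω).2) ?_
  rw [hμ _ hA, hμ _ hL,
    pi_expMeasure_raceSet (t := fun j u => Ici (ρ j / ρ k * u)) one_pos k ha
      (fun j => measurableSet_le (by fun_prop) measurable_snd)
      (fun j s hs => expMeasure_Ici one_pos (mul_nonneg (ha j) hs)),
    pi_expMeasure_raceSet (t := fun j u => Ioi (max (ρ j / ρ k * u) (σ j / σ k * u)))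
      (m := fun j => max (ρ j / ρ k) (σ j / σ k)) one_pos k hmax
      (fun j => measurableSet_lt (by fun_prop) measurable_snd)
      (fun j s hs => by
        rw [← max_mul_of_nonneg _ _ hs, expMeasure_Ioi one_pos (mul_nonneg (hmax j) hs)]),
    mul_left_comm, ← ENNReal.ofReal_mul (inv_nonneg.2 (by linarith)), ← mul_inv]
  gcongr _ * ENNReal.ofReal ?_
  exact inv_anti₀ (add_pos_of_pos_of_nonneg one_pos (Finset.sum_nonneg fun j _ => hmax j))
    (one_add_sum_max_div_le hρ hσ k)

lemma pi_prod_setOf_fst_mem_and_snd_mem {ι α β : Type*} [Fintype ι] [MeasurableSpace α]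
    [MeasurableSpace β] (ν₁ : Measure α) (ν₂ : Measure β) [SigmaFinite ν₁] [SigmaFinite ν₂]
    (R : Set (ι → α)) (Q : Set (ι → β)) :
    Measure.pi (fun _ => ν₁.prod ν₂) {f | (fun i => (f i).1) ∈ R ∧ (fun i => (f i).2) ∈ Q}
      = Measure.pi (fun _ => ν₁) R * Measure.pi (fun _ => ν₂) Q := by
  rw [← Measure.prod_prod, ← (measurePreserving_arrowProdEquivProdArrow α β ι
    (fun _ => ν₁) (fun _ => ν₂)).measure_preimage_equiv]
  rfl

lemma MeasurableSet.setOf_fst_mem_and_snd_mem {ι α β : Type*} [MeasurableSpace α]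
    [MeasurableSpace β] {R : Set (ι → α)} {Q : Set (ι → β)} (hR : MeasurableSet R)
    (hQ : MeasurableSet Q) :
    MeasurableSet {f : ι → α × β | (fun i => (f i).1) ∈ R ∧ (fun i => (f i).2) ∈ Q} :=
  (hR.preimage (by fun_prop)).inter (hQ.preimage (by fun_prop))

lemma measure_setOf_fst_mem_and_snd_mem {Ω ι α β : Type*} [Fintype ι] [MeasurableSpace Ω]
    [MeasurableSpace α] [MeasurableSpace β] {μ : Measure Ω} [IsProbabilityMeasure μ]
    {ν₁ : Measure α} {ν₂ : Measure β} [SigmaFinite ν₁] [SigmaFinite ν₂]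
    {S : ι → Ω → α} {Y : ι → Ω → β} (hS : ∀ i, Measurable (S i)) (hY : ∀ i, Measurable (Y i))
    (hindep : iIndepFun (fun i ω => (S i ω, Y i ω)) μ)
    (hlaw : ∀ i, μ.map (fun ω => (S i ω, Y i ω)) = ν₁.prod ν₂)
    {R : Set (ι → α)} {Q : Set (ι → β)} (hR : MeasurableSet R) (hQ : MeasurableSet Q) :
    μ ((fun ω i => (S i ω, Y i ω)) ⁻¹' {f | (fun i => (f i).1) ∈ R ∧ (fun i => (f i).2) ∈ Q})
      = Measure.pi (fun _ => ν₁) R * Measure.pi (fun _ => ν₂) Q := by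
  have hSY : ∀ i, Measurable fun ω => (S i ω, Y i ω) := fun i => (hS i).prodMk (hY i)
  rw [← Measure.map_apply (measurable_pi_lambda _ hSY) (hR.setOf_fst_mem_and_snd_mem hQ),
    hindep.map_fun_eq_pi_map fun i => (hSY i).aemeasurable]
  simp only [hlaw]
  exact pi_prod_setOf_fst_mem_and_snd_mem ν₁ ν₂ R Q

lemma measure_setOf_mem_and_mem_and_mem_and_mem {Ω ι α β γ δ : Type*} [Fintype ι]
    [MeasurableSpace Ω] [MeasurableSpace α] [MeasurableSpace β] [MeasurableSpace γ]
    [MeasurableSpace δ] {μ : Measure Ω} [IsProbabilityMeasure μ]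
    {ν₁ : Measure α} {ν₂ : Measure β} [SigmaFinite ν₁] [SigmaFinite ν₂]
    {S : ι → Ω → α} {Y : ι → Ω → β} (hS : ∀ i, Measurable (S i)) (hY : ∀ i, Measurable (Y i))
    (hindep : iIndepFun (fun i ω => (S i ω, Y i ω)) μ)
    (hlaw : ∀ i, μ.map (fun ω => (S i ω, Y i ω)) = ν₁.prod ν₂)
    {X : Ω → γ} {V : Ω → δ} (hXindep : IndepFun X (fun ω i => (S i ω, Y i ω)) μ)
    (hVindep : IndepFun V (fun ω => (X ω, fun i => (S i ω, Y i ω))) μ)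
    {A : Set δ} {B : Set γ} {R : Set (ι → α)} {Q : Set (ι → β)} (hA : MeasurableSet A)
    (hB : MeasurableSet B) (hR : MeasurableSet R) (hQ : MeasurableSet Q) :
    μ {ω | V ω ∈ A ∧ X ω ∈ B ∧ (fun i => S i ω) ∈ R ∧ (fun i => Y i ω) ∈ Q}
      = μ (V ⁻¹' A) * μ (X ⁻¹' B)
        * (Measure.pi (fun _ => ν₁) R * Measure.pi (fun _ => ν₂) Q) := by
  have hC := hR.setOf_fst_mem_and_snd_mem hQ
  rw [← measure_setOf_fst_mem_and_snd_mem hS hY hindep hlaw hR hQ, mul_assoc,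
    ← hXindep.measure_inter_preimage_eq_mul _ _ hB hC]
  exact hVindep.measure_inter_preimage_eq_mul _ (B ×ˢ _) hA (hB.prod hC)

lemma measurableSet_setOf_mem_and_mem_and_mem_and_mem {Ω ι α β γ δ : Type*}
    [MeasurableSpace Ω] [MeasurableSpace α] [MeasurableSpace β] [MeasurableSpace γ]
    [MeasurableSpace δ] {S : ι → Ω → α} {Y : ι → Ω → β} {X : Ω → γ} {V : Ω → δ}
    (hS : ∀ i, Measurable (S i)) (hY : ∀ i, Measurable (Y i)) (hX : Measurable X)
    (hV : Measurable V) {A : Set δ} {B : Set γ} {R : Set (ι → α)} {Q : Set (ι → β)}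
    (hA : MeasurableSet A) (hB : MeasurableSet B) (hR : MeasurableSet R) (hQ : MeasurableSet Q) :
    MeasurableSet {ω | V ω ∈ A ∧ X ω ∈ B ∧ (fun i => S i ω) ∈ R ∧ (fun i => Y i ω) ∈ Q} :=
  (hV.prodMk (hX.prodMk ((measurable_pi_lambda _ hS).prodMk (measurable_pi_lambda _ hY))))
    (hA.prod (hB.prod (hR.prod hQ)))

lemma measurable_apply_apply {Ω ι β : Type*} [MeasurableSpace Ω] [MeasurableSpace ι]
    [MeasurableSpace β] [Countable ι] [MeasurableSingletonClass ι] {U : Ω → ι} {Y : ι → Ω → β}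
    (hU : Measurable U) (hY : ∀ i, Measurable (Y i)) : Measurable fun ω => Y (U ω) ω :=
  (measurable_from_prod_countable_right (f := fun p : ι × Ω => Y p.1 p.2) hY).comp
    (hU.prodMk measurable_id)

theorem stmt14_general
    {𝒳 : Type*} [MeasurableSpace 𝒳] [MeasurableSingletonClass 𝒳]
    {𝒴 : Type*} [MeasurableSpace 𝒴] [MeasurableSingletonClass 𝒴]
    {𝒵 : Type*} [MeasurableSpace 𝒵] [MeasurableSingletonClass 𝒵]
    {𝒱 : Type*} [MeasurableSpace 𝒱]
    (P : Measure 𝒴) [IsProbabilityMeasure P]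
    (pY : 𝒴 → ℝ) (hpY_pos : ∀ y, 0 < pY y)
    (pYX : 𝒳 → 𝒴 → ℝ) (hpYX_pos : ∀ x y, 0 < pYX x y)
    (QYZ : 𝒵 → 𝒴 → ℝ) (hQ_pos : ∀ z y, 0 < QYZ z y)
    {Ω : Type*} [MeasurableSpace Ω] (μ : Measure Ω) [IsProbabilityMeasure μ]
    (N : ℕ)
    (S : Fin N → Ω → ℝ) (Y : Fin N → Ω → 𝒴)
    (hSmeas : ∀ i, Measurable (S i)) (hYmeas : ∀ i, Measurable (Y i))
    (hindep : iIndepFun (fun i ω => (S i ω, Y i ω)) μ)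
    (hlaw : ∀ i, μ.map (fun ω => (S i ω, Y i ω)) = (expMeasure 1).prod P)
    (X : Ω → 𝒳) (hXmeas : Measurable X)
    (V : Ω → 𝒱) (hVmeas : Measurable V)
    (hXindep : IndepFun X (fun ω (i : Fin N) => (S i ω, Y i ω)) μ)
    (hVindep : IndepFun V (fun ω => (X ω, fun i : Fin N => (S i ω, Y i ω))) μ)
    (Up Uq : Ω → Fin N) (hUpmeas : Measurable Up)
    (hUp : ∀ ω j,
      S (Up ω) ω * pY (Y (Up ω) ω) / pYX (X ω) (Y (Up ω) ω)
        ≤ S j ω * pY (Y j ω) / pYX (X ω) (Y j ω))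
    (ζ : 𝒳 → 𝒴 → 𝒱 → 𝒵)
    (hζmeas : Measurable fun p : 𝒳 × 𝒴 × 𝒱 => ζ p.1 p.2.1 p.2.2)
    (Z : Ω → 𝒵) (hZ : Z = fun ω => ζ (X ω) (Y (Up ω) ω) (V ω))
    (hUq : ∀ ω j,
      S (Uq ω) ω * pY (Y (Uq ω) ω) / QYZ (Z ω) (Y (Uq ω) ω)
        ≤ S j ω * pY (Y j ω) / QYZ (Z ω) (Y j ω))
    (k : Fin N) (x : 𝒳) (z : 𝒵) (yv : Fin N → 𝒴) :
    μ[|{ω | Up ω = k ∧ X ω = x ∧ Z ω = z ∧ ∀ i, Y i ω = yv i}] {ω | Up ω ≠ Uq ω}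
      ≤ ENNReal.ofReal (1 - (1 + pYX x (yv k) / QYZ z (yv k) *
          (((N : ℝ)⁻¹ * ∑ j, QYZ z (yv j) / pY (yv j)) /
            ((N : ℝ)⁻¹ * ∑ j, pYX x (yv j) / pY (yv j))))⁻¹) := by
  set ρ : Fin N → ℝ := fun j => pYX x (yv j) / pY (yv j)
  set σ : Fin N → ℝ := fun j => QYZ z (yv j) / pY (yv j)
  have hρ : ∀ j, 0 < ρ j := fun j => div_pos (hpYX_pos _ _) (hpY_pos _)
  have hσ : ∀ j, 0 < σ j := fun j => div_pos (hQ_pos _ _) (hpY_pos _)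
  have hq : pYX x (yv k) / QYZ z (yv k) * (((N : ℝ)⁻¹ * ∑ j, σ j) / ((N : ℝ)⁻¹ * ∑ j, ρ j))
      = ρ k / σ k * ((∑ j, σ j) / ∑ j, ρ j) := by
    rw [div_div_div_cancel_right₀ (hpY_pos _).ne',
      mul_div_mul_left _ _ (inv_ne_zero (Nat.cast_ne_zero.2 (Fin.pos k).ne'))]
  have hUp_ratio : ∀ ω, X ω = x → (∀ i, Y i ω = yv i) → ∀ j, S (Up ω) ω / ρ (Up ω) ≤ S j ω / ρ j :=
    fun ω hX hY j => by simpa only [ρ, div_div_eq_mul_div, hX, hY] using hUp ω j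
  have hUq_ratio : ∀ ω, Z ω = z → (∀ i, Y i ω = yv i) → ∀ j, S (Uq ω) ω / σ (Uq ω) ≤ S j ω / σ j :=
    fun ω hZ hY j => by simpa only [σ, div_div_eq_mul_div, hZ, hY] using hUq ω j
  have hG : MeasurableSet (ζ x (yv k) ⁻¹' {z}) :=
    hζmeas.comp (measurable_const.prodMk (measurable_const.prodMk measurable_id))
      (measurableSet_singleton z)
  have hZmeas : Measurable Z :=
    hZ ▸ hζmeas.comp (hXmeas.prodMk ((measurable_apply_apply hUpmeas hYmeas).prodMk hVmeas))
  have hE : MeasurableSet {ω | Up ω = k ∧ X ω = x ∧ Z ω = z ∧ ∀ i, Y i ω = yv i} := by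
    have : {ω | Up ω = k ∧ X ω = x ∧ Z ω = z ∧ ∀ i, Y i ω = yv i}
        = (fun ω => (Up ω, X ω, Z ω, fun i => Y i ω)) ⁻¹' {(k, x, z, yv)} := by
      ext ω; simp [funext_iff]
    exact this ▸ (hUpmeas.prodMk (hXmeas.prodMk (hZmeas.prodMk (measurable_pi_lambda _ hYmeas))))
      (measurableSet_singleton _)
  rw [hq]
  refine cond_le_of_subset_raceSet (event := fun R => {ω | V ω ∈ ζ x (yv k) ⁻¹' {z} ∧
      X ω ∈ ({x} : Set 𝒳) ∧ (fun i => S i ω) ∈ R ∧ (fun i => Y i ω) ∈ ({yv} : Set (Fin N → 𝒴))})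
    (c := μ (V ⁻¹' (ζ x (yv k) ⁻¹' {z})) * μ (X ⁻¹' {x}) * Measure.pi (fun _ => P) {yv})
    hρ hσ hE (fun R hR => measurableSet_setOf_mem_and_mem_and_mem_and_mem hSmeas hYmeas hXmeas
      hVmeas hG (measurableSet_singleton x) hR (measurableSet_singleton yv)) (fun R hR => ?_) ?_ ?_
  · rw [measure_setOf_mem_and_mem_and_mem_and_mem hSmeas hYmeas hindep hlaw hXindep hVindep hG
      (measurableSet_singleton x) hR (measurableSet_singleton yv)]
    ring
  · rintro ω ⟨hUpk, hXx, hZz, hYy⟩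
    refine ⟨?_, hXx, hUpk ▸ mem_raceSet_of_forall_div_le hρ (hUp_ratio ω hXx hYy), funext hYy⟩
    simpa only [mem_preimage, mem_singleton_iff, hZ, hUpk, hXx, hYy k] using hZz
  · rintro ω ⟨hGω, hXx : X ω = x, hS, hY⟩
    have hYy : ∀ i, Y i ω = yv i := fun i => congrFun hY i
    have hUpk : Up ω = k := eq_of_mem_raceSet hρ (hUp_ratio ω hXx hYy)
      (raceSet_mono (fun _ _ => Ioi_subset_Ioi (le_max_left _ _)) hS)
    have hZz : Z ω = z := by
      simpa only [mem_preimage, mem_singleton_iff, hZ, hUpk, hXx, hYy k] using hGω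
    have hUqk : Uq ω = k := eq_of_mem_raceSet hσ (hUq_ratio ω hZz hYy)
      (raceSet_mono (fun _ _ => Ioi_subset_Ioi (le_max_right _ _)) hS)
    exact ⟨⟨hUpk, hXx, hZz, hYy⟩, fun hne => hne (hUpk.trans hUqk.symm)⟩

/-- Conditional Importance Matching Lemma, conditional-on-proposals form.
On countable alphabets `𝒴`, `𝒵`: `(S i, Y i)` are i.i.d. with `Y i ∼ P` (pmf `pY`) and
`S i ∼ Exponential(1)`; `X` (and the fresh randomness `V` used to sample
`Z ∼ p_{Z|X,Y}(·|X, Y_{U_P})`, realized as `Z = ζ(X, Y_{U_P}, V)`) is independent of the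
`(S i, Y i)`.  The encoder selects `U_P = argmin_i S i ⬝ pY (Y i)/p_{Y|X}(Y i|X)` and the
decoder `U_Q = argmin_i S i ⬝ pY (Y i)/Q_{Y|Z}(Y i|Z)`, where `Q_{Y|Z}(y|z) ≤ ω pY y`.
Then for all `k`, `x`, `z`, and proposal values `y₁,…,y_N`:
`Pr(U_P ≠ U_Q ∣ U_P = k, X = x, Z = z, Y^N = y^N)
  ≤ 1 − (1 + (p_{Y|X}(y_k|x)/Q_{Y|Z}(y_k|z)) ⬝
      ((1/N)∑ⱼ Q_{Y|Z}(yⱼ|z)/pY yⱼ)/((1/N)∑ⱼ p_{Y|X}(yⱼ|x)/pY yⱼ))⁻¹`. -/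
theorem stmt14
    {𝒳 : Type*} [MeasurableSpace 𝒳] [MeasurableSingletonClass 𝒳]
    {𝒴 : Type*} [Countable 𝒴] [MeasurableSpace 𝒴] [MeasurableSingletonClass 𝒴]
    {𝒵 : Type*} [Countable 𝒵] [MeasurableSpace 𝒵] [MeasurableSingletonClass 𝒵]
    {𝒱 : Type*} [MeasurableSpace 𝒱]
    (P : Measure 𝒴) [IsProbabilityMeasure P]
    (pY : 𝒴 → ℝ) (hpY : ∀ y, P {y} = ENNReal.ofReal (pY y)) (hpY_pos : ∀ y, 0 < pY y)
    (om : ℝ)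
    (pYX : 𝒳 → 𝒴 → ℝ) (hpYX_pos : ∀ x y, 0 < pYX x y)
    (hpYX_sum : ∀ x, ∑' y, pYX x y = 1)
    (QYZ : 𝒵 → 𝒴 → ℝ) (hQ_pos : ∀ z y, 0 < QYZ z y)
    (hQ_sum : ∀ z, ∑' y, QYZ z y = 1)
    (hQ_om : ∀ z y, QYZ z y ≤ om * pY y)
    {Ω : Type*} [MeasurableSpace Ω] (μ : Measure Ω) [IsProbabilityMeasure μ]
    (N : ℕ) (hN : 0 < N)
    (S : Fin N → Ω → ℝ) (Y : Fin N → Ω → 𝒴)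
    (hSmeas : ∀ i, Measurable (S i)) (hYmeas : ∀ i, Measurable (Y i))
    (hindep : iIndepFun (fun i ω => (S i ω, Y i ω)) μ)
    (hlaw : ∀ i, μ.map (fun ω => (S i ω, Y i ω)) = (expMeasure 1).prod P)
    (X : Ω → 𝒳) (hXmeas : Measurable X)
    (V : Ω → 𝒱) (hVmeas : Measurable V)
    (hXindep : IndepFun X (fun ω (i : Fin N) => (S i ω, Y i ω)) μ)
    (hVindep : IndepFun V (fun ω => (X ω, fun i : Fin N => (S i ω, Y i ω))) μ)
    (Up Uq : Ω → Fin N) (hUpmeas : Measurable Up) (hUqmeas : Measurable Uq)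
    (hUp : ∀ ω j,
      S (Up ω) ω * pY (Y (Up ω) ω) / pYX (X ω) (Y (Up ω) ω)
        ≤ S j ω * pY (Y j ω) / pYX (X ω) (Y j ω))
    (ζ : 𝒳 → 𝒴 → 𝒱 → 𝒵)
    (hζmeas : Measurable fun p : 𝒳 × 𝒴 × 𝒱 => ζ p.1 p.2.1 p.2.2)
    (Z : Ω → 𝒵) (hZ : Z = fun ω => ζ (X ω) (Y (Up ω) ω) (V ω))
    (hUq : ∀ ω j,
      S (Uq ω) ω * pY (Y (Uq ω) ω) / QYZ (Z ω) (Y (Uq ω) ω)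
        ≤ S j ω * pY (Y j ω) / QYZ (Z ω) (Y j ω))
    (k : Fin N) (x : 𝒳) (z : 𝒵) (yv : Fin N → 𝒴) :
    μ[|{ω | Up ω = k ∧ X ω = x ∧ Z ω = z ∧ ∀ i, Y i ω = yv i}] {ω | Up ω ≠ Uq ω}
      ≤ ENNReal.ofReal (1 - (1 + pYX x (yv k) / QYZ z (yv k) *
          (((N : ℝ)⁻¹ * ∑ j, QYZ z (yv j) / pY (yv j)) /
            ((N : ℝ)⁻¹ * ∑ j, pYX x (yv j) / pY (yv j))))⁻¹) :=
  stmt14_general P pY hpY_pos pYX hpYX_pos QYZ hQ_pos μ N S Y hSmeas hYmeas hindep hlaw X hXmeas V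
    hVmeas hXindep hVindep Up Uq hUpmeas hUp ζ hζmeas Z hZ hUq k x z yv
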